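/- Residual of the projected solution in FGMRES with singular Hessenberg: if A Z_j = Q_{j+1} H̄_j, H(j+1,j) = 0, and H_j := H(1:j,1:j) is singular, then beta e_1 need not lie in the range of H_j, and in that case the minimum of ||b - A(x_0 + Z_j y)||_2 over y is strictly positive, i.e., FGMRES cannot produce the exact solution from the current space. -/

import Mathlib

/-!
Since `r₀ = β q₀` and `A z_k = ∑ᵢ H i k • qᵢ`, the residual of `x₀ + Z y` is the combination
`∑ᵢ (βe₁ - H̄ y)ᵢ qᵢ`. The `qᵢ` are orthonormal, so its Euclidean norm is that of the coefficient
vector `βe₁ - H̄ y`, which is nonzero because `βe₁` is not in the range of `H̄`.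
-/

open Matrix

noncomputable def vnorm {n : ℕ} (v : Fin n → ℝ) : ℝ := Real.sqrt (∑ i, (v i) ^ 2)

theorem vnorm_eq_sqrt_dotProduct {n : ℕ} (v : Fin n → ℝ) : vnorm v = √(v ⬝ᵥ v) := by
  simp only [vnorm, dotProduct, sq]

theorem vnorm_pos {n : ℕ} {v : Fin n → ℝ} (hv : v ≠ 0) : 0 < vnorm v := by
  rw [vnorm_eq_sqrt_dotProduct, Real.sqrt_pos]
  exact (Fintype.sum_nonneg fun i => mul_self_nonneg (v i)).lt_of_ne'
    (dotProduct_self_eq_zero.not.mpr hv)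

theorem dotProduct_self_sum_smul_of_orthonormal {ι n R : Type*} [Fintype ι] [DecidableEq ι]
    [Fintype n] [CommRing R] {q : ι → n → R}
    (hq : ∀ i k, q i ⬝ᵥ q k = if i = k then 1 else 0) (c : ι → R) :
    (∑ i, c i • q i) ⬝ᵥ (∑ i, c i • q i) = c ⬝ᵥ c := by
  simp only [sum_dotProduct, dotProduct_sum, smul_dotProduct, dotProduct_smul, hq, smul_eq_mul,
    mul_ite, mul_one, mul_zero, Finset.sum_ite_eq', Finset.mem_univ, if_true]
  rfl

theorem vnorm_sum_smul_of_orthonormal {k n : ℕ} {q : Fin k → Fin n → ℝ}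
    (hq : ∀ i j, q i ⬝ᵥ q j = if i = j then 1 else 0) (c : Fin k → ℝ) :
    vnorm (∑ i, c i • q i) = vnorm c := by
  rw [vnorm_eq_sqrt_dotProduct, vnorm_eq_sqrt_dotProduct,
    dotProduct_self_sum_smul_of_orthonormal hq]

theorem sum_smul_sum_smul_eq_mulVec {ν μ R M : Type*} [Fintype ν] [Fintype μ] [CommRing R]
    [AddCommGroup M] [Module R M] (H : Matrix ν μ R) (q : ν → M) (y : μ → R) :
    ∑ k, y k • ∑ i, H i k • q i = ∑ i, (H *ᵥ y) i • q i := by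
  simp only [Finset.smul_sum, smul_smul, mulVec, dotProduct, Finset.sum_smul]
  rw [Finset.sum_comm]
  simp only [mul_comm]

theorem sub_mulVec_add_sum_smul {ι κ μ ν R : Type*} [Fintype κ] [Fintype μ] [Fintype ν]
    [CommRing R] {A : Matrix ι κ R} {z : μ → κ → R} {q : ν → ι → R} {H : Matrix ν μ R}
    (hrel : ∀ k, A *ᵥ z k = ∑ i, H i k • q i) {b : ι → R} {x0 : κ → R} {c : ν → R}
    (hr0 : b - A *ᵥ x0 = ∑ i, c i • q i) (y : μ → R) :
    b - A *ᵥ (x0 + ∑ k, y k • z k) = ∑ i, (c - H *ᵥ y) i • q i := by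
  simp only [mulVec_add, mulVec_sum, mulVec_smul, hrel, sum_smul_sum_smul_eq_mulVec, Pi.sub_apply,
    sub_smul, Finset.sum_sub_distrib, ← hr0]
  abel

/-- FGMRES with singular Hessenberg matrix: if `A Z_j = Q_{j+1} H̄_j`, `H(j+1,j) = 0`,
`H_j = H(1:j,1:j)` is singular, and `β e_1` does not lie in the column span of `H̄_j`,
then `‖b - A(x_0 + Z_j y)‖₂ = ‖β e_1 - H̄_j y‖₂ > 0` for all `y`: FGMRES cannot produce
the exact solution from the current space. -/
theorem fgmres_singular_hessenberg_positive_residual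
    {n m : ℕ}
    (A : Matrix (Fin n) (Fin n) ℝ)
    (b x0 : Fin n → ℝ)
    (r0 : Fin n → ℝ) (hr0 : r0 = b - A.mulVec x0)
    (β : ℝ) (hβpos : 0 < β)
    (q : Fin (m + 1) → Fin n → ℝ)
    (hq0 : q 0 = β⁻¹ • r0)
    (horth : ∀ i k : Fin (m + 1), (∑ t, q i t * q k t) = if i = k then 1 else 0)
    (z : Fin m → Fin n → ℝ)
    (H : Matrix (Fin (m + 1)) (Fin m) ℝ)
    (hrel : ∀ k : Fin m, A.mulVec (z k) = ∑ i, H i k • q i)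
    (hnot : ∀ y : Fin m → ℝ,
      H.mulVec y ≠ fun i => if i = (0 : Fin (m + 1)) then β else 0) :
    ∀ y : Fin m → ℝ,
      vnorm (b - A.mulVec (x0 + ∑ k, y k • z k)) =
        vnorm ((fun i => if i = (0 : Fin (m + 1)) then β else 0) - H.mulVec y) ∧
      0 < vnorm ((fun i => if i = (0 : Fin (m + 1)) then β else 0) - H.mulVec y) := by
  intro y
  have hr0_coords : b - A *ᵥ x0 = ∑ i, (if i = (0 : Fin (m + 1)) then β else 0) • q i := by
    simp only [ite_smul, zero_smul, Finset.sum_ite_eq', Finset.mem_univ, if_true, hq0, smul_smul,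
      mul_inv_cancel₀ hβpos.ne', one_smul, hr0]
  rw [sub_mulVec_add_sum_smul hrel hr0_coords y]
  exact ⟨vnorm_sum_smul_of_orthonormal horth _, vnorm_pos (sub_ne_zero.mpr (hnot y).symm)⟩
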